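/- For n ≥ 3, Disc_T(A_1 T + A_{n-1} T^{n-1} + A_n T^n) = ± A_1^2 · Disc_T(A_1 + A_{n-1} T^{n-2} + A_n T^{n-1}). -/

import Mathlib

open Polynomial

/-- The Sylvester matrix of two polynomials `f`, `g` (with respect to their
natural degrees): the first `g.natDegree` rows carry the coefficients of `f`,
the remaining `f.natDegree` rows carry the coefficients of `g`. -/
noncomputable def sylvester {R : Type*} [CommRing R] (f g : R[X]) :
    Matrix (Fin (f.natDegree + g.natDegree)) (Fin (f.natDegree + g.natDegree)) R :=
  Matrix.of fun i j =>
    if (i : ℕ) < g.natDegree then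
      (if (i : ℕ) ≤ (j : ℕ) ∧ (j : ℕ) ≤ (i : ℕ) + f.natDegree then
        f.coeff (f.natDegree + (i : ℕ) - (j : ℕ)) else 0)
    else
      (if (i : ℕ) - g.natDegree ≤ (j : ℕ) ∧ (j : ℕ) ≤ ((i : ℕ) - g.natDegree) + g.natDegree then
        g.coeff (g.natDegree + ((i : ℕ) - g.natDegree) - (j : ℕ)) else 0)

/-- The resultant `Res_T(f, g)`, the determinant of the Sylvester matrix. -/
noncomputable def resultant {R : Type*} [CommRing R] (f g : R[X]) : R :=
  (_root_.sylvester f g).det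

/-- `IsDiscOf f D` says `D` is the discriminant of `f`, characterized (without
division) by `lc(f) · D = (-1)^(n(n-1)/2) · Res_T(f, f')` where `n = deg f`.
Over an integral domain with `lc(f) ≠ 0` this determines `D` uniquely. -/
def IsDiscOf {R : Type*} [CommRing R] (f : R[X]) (D : R) : Prop :=
  f.leadingCoeff * D =
    (-1) ^ (f.natDegree * (f.natDegree - 1) / 2) * _root_.resultant f (derivative f)

/-- The discriminant of a polynomial over a field:
`Disc_T(f) = (-1)^(n(n-1)/2) · Res_T(f, f') / lc(f)`. -/
noncomputable def disc {F : Type*} [Field F] (f : F[X]) : F :=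
  ((-1) ^ (f.natDegree * (f.natDegree - 1) / 2) * _root_.resultant f (derivative f)) / f.leadingCoeff

/-! The first trinomial is `T · Q` for the second one, `Q`. Discriminants are multiplicative up to
the square of the resultant, so `Disc(T · Q) = Disc(T) Disc(Q) Res(T, Q)^2 = Q(0)^2 Disc(Q)`,
and `Q(0) = A_1` because `n - 2 > 0`; in particular the sign is always `+`. -/

theorem sylvester_eq_transpose_submatrix_rev {R : Type*} [CommRing R] (f g : R[X]) :
    _root_.sylvester f g =
      ((Polynomial.sylvester f g f.natDegree g.natDegree).submatrix Fin.rev Fin.rev).transpose := by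
  ext i j
  have hi := i.isLt
  have hj := j.isLt
  simp only [_root_.sylvester, Polynomial.sylvester, Matrix.transpose_apply, Matrix.submatrix_apply,
    Matrix.of_apply]
  by_cases h : (i : ℕ) < g.natDegree
  · obtain ⟨k, hk⟩ : ∃ k : Fin g.natDegree, Fin.rev i = Fin.natAdd f.natDegree k :=
      ⟨⟨g.natDegree - 1 - i, by omega⟩, Fin.ext (by simp; omega)⟩
    rw [hk, Fin.addCases_right, if_pos h]
    have hk' := congrArg Fin.val hk
    simp only [Fin.val_rev, Fin.val_natAdd] at hk'
    simp only [Set.mem_Icc, Fin.val_rev]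
    congr 1
    · apply propext; omega
    · congr 1; omega
  · obtain ⟨k, hk⟩ : ∃ k : Fin f.natDegree, Fin.rev i = Fin.castAdd g.natDegree k :=
      ⟨⟨f.natDegree + g.natDegree - 1 - i, by omega⟩, Fin.ext (by simp; omega)⟩
    rw [hk, Fin.addCases_left, if_neg h]
    have hk' := congrArg Fin.val hk
    simp only [Fin.val_rev, Fin.val_castAdd] at hk'
    simp only [Set.mem_Icc, Fin.val_rev]
    congr 1
    · apply propext; omega
    · congr 1; omega

theorem resultant_eq_polynomial_resultant {R : Type*} [CommRing R] (f g : R[X]) :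
    _root_.resultant f g = Polynomial.resultant f g := by
  rw [_root_.resultant, sylvester_eq_transpose_submatrix_rev, Matrix.det_transpose]
  exact Matrix.det_submatrix_equiv_self Fin.revPerm _

theorem IsDiscOf.eq_discr {R : Type*} [CommRing R] [IsDomain R] [IsAddTorsionFree R] {f : R[X]}
    {D : R} (hf : 0 < f.natDegree) (h : IsDiscOf f D) : D = f.discr := by
  have hlc : f.leadingCoeff ≠ 0 := leadingCoeff_ne_zero.2 (ne_zero_of_natDegree_gt hf)
  rw [IsDiscOf, resultant_eq_polynomial_resultant, natDegree_derivative,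
    resultant_deriv (natDegree_pos_iff_degree_pos.1 hf), ← mul_assoc, ← mul_assoc, ← pow_add,
    Even.neg_one_pow ⟨_, rfl⟩, one_mul] at h
  exact mul_left_cancel₀ hlc h

namespace Polynomial

theorem resultant_X_mul_derivative {R : Type*} [CommRing R] [Nontrivial R] {Q : R[X]}
    (hQ : Q.derivative.natDegree + 1 = Q.natDegree) :
    resultant (X * Q) (X * Q).derivative (Q.natDegree + 1) Q.natDegree =
      (-1) ^ Q.natDegree * Q.coeff 0 ^ 2 * resultant Q Q.derivative := by
  have hsplit : (X * Q).derivative = X * Q.derivative + Q * 1 := by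
    rw [derivative_mul, derivative_X]; ring
  have hdeg : (X * Q).derivative.natDegree ≤ Q.natDegree := by
    have := natDegree_mul_le (p := X) (q := Q)
    rw [natDegree_X] at this
    exact (natDegree_derivative_le _).trans (by omega)
  have hX : resultant X (X * Q).derivative 1 Q.natDegree = Q.coeff 0 := by
    have := resultant_X_pow_left (derivative (X * Q)) 1 Q.natDegree hdeg
    rw [pow_one, pow_one] at this
    rw [this, coeff_derivative]
    simp
  have hQX : resultant Q (X * Q.derivative) Q.natDegree Q.natDegree =
      (-1) ^ Q.natDegree * Q.coeff 0 * resultant Q Q.derivative := by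
    have hXn : Q.resultant X Q.natDegree 1 = (-1) ^ Q.natDegree * Q.coeff 0 := by
      have := resultant_X_pow_right Q Q.natDegree 1 le_rfl
      rwa [pow_one, mul_one, pow_one] at this
    have := resultant_mul_right Q X Q.derivative Q.natDegree le_rfl
    rwa [natDegree_X, add_comm, hQ, hXn] at this
  rw [add_comm, ← natDegree_X (R := R), resultant_mul_left _ _ _ _ hdeg, natDegree_X, hX, hsplit,
    resultant_add_mul_right _ _ _ _ _ (by simp) le_rfl, hQX]
  ring

theorem discr_X_mul {R : Type*} [CommRing R] [IsDomain R] [IsAddTorsionFree R] {Q : R[X]}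
    (hQ : 0 < Q.natDegree) : (X * Q).discr = Q.coeff 0 ^ 2 * Q.discr := by
  have hQ0 : Q ≠ 0 := ne_zero_of_natDegree_gt hQ
  have hdeg : (X * Q).natDegree = Q.natDegree + 1 := natDegree_X_mul hQ0
  have htri : (Q.natDegree + 1) * Q.natDegree / 2 =
      Q.natDegree * (Q.natDegree - 1) / 2 + Q.natDegree := by
    simpa using Nat.triangle_succ Q.natDegree
  have hP := resultant_deriv (f := X * Q) (natDegree_pos_iff_degree_pos.1 (by omega))
  rw [hdeg, Nat.add_sub_cancel, resultant_X_mul_derivative (by rw [natDegree_derivative]; omega),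
    natDegree_derivative, resultant_deriv (natDegree_pos_iff_degree_pos.1 hQ), htri,
    leadingCoeff_mul, leadingCoeff_X, one_mul, pow_add] at hP
  have hne : (-1 : R) ^ (Q.natDegree * (Q.natDegree - 1) / 2) * (-1) ^ Q.natDegree *
      Q.leadingCoeff ≠ 0 :=
    mul_ne_zero (by simp) (leadingCoeff_ne_zero.2 hQ0)
  apply mul_left_cancel₀ hne
  linear_combination -hP

end Polynomial

section SparseTrinomial

variable {R : Type*} {n : ℕ}

theorem sparse_trinomial_eq_X_mul [CommSemiring R] (a b c : R) (hn : 2 ≤ n) :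
    C a * X + C b * X ^ (n - 1) + C c * X ^ n =
      X * (C a + C b * X ^ (n - 2) + C c * X ^ (n - 1)) := by
  obtain ⟨k, rfl⟩ : ∃ k, n = k + 2 := ⟨n - 2, by omega⟩
  rw [show k + 2 - 1 = k + 1 by omega, Nat.add_sub_cancel]
  ring

theorem coeff_zero_sparse_trinomial [Semiring R] (a b c : R) (hn : 3 ≤ n) :
    (C a + C b * X ^ (n - 2) + C c * X ^ (n - 1)).coeff 0 = a := by
  simp only [coeff_add, coeff_C_zero, coeff_C_mul_X_pow]
  rw [if_neg (by omega), if_neg (by omega), add_zero, add_zero]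

theorem natDegree_sparse_trinomial_pos [Semiring R] (a b : R) {c : R} (hn : 3 ≤ n)
    (hc : c ≠ 0) :
    0 < (C a + C b * X ^ (n - 2) + C c * X ^ (n - 1)).natDegree := by
  refine lt_of_lt_of_le (by omega : 0 < n - 1) (le_natDegree_of_ne_zero ?_)
  simpa [coeff_C, coeff_C_mul_X_pow, show n - 1 ≠ 0 by omega, show n - 1 ≠ n - 2 by omega]
    using hc

theorem IsDiscOf.sparse_trinomial [CommRing R] [IsDomain R] [IsAddTorsionFree R] {a b c : R}
    (hn : 3 ≤ n) (hc : c ≠ 0) {Dp Dq : R}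
    (hDp : IsDiscOf (C a * X + C b * X ^ (n - 1) + C c * X ^ n) Dp)
    (hDq : IsDiscOf (C a + C b * X ^ (n - 2) + C c * X ^ (n - 1)) Dq) : Dp = a ^ 2 * Dq := by
  have hQ := natDegree_sparse_trinomial_pos a b hn hc
  rw [sparse_trinomial_eq_X_mul a b c (by omega)] at hDp
  rw [hDp.eq_discr (by rw [natDegree_X_mul (ne_zero_of_natDegree_gt hQ)]; omega),
    hDq.eq_discr hQ, discr_X_mul hQ, coeff_zero_sparse_trinomial a b c hn]

end SparseTrinomial

open MvPolynomial in
/-- For `n ≥ 3`,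
`Disc_T(A_1 T + A_{n-1} T^(n-1) + A_n T^n)
  = ± A_1^2 · Disc_T(A_1 + A_{n-1} T^(n-2) + A_n T^(n-1))`,
where the sign depends only on `n`. -/
theorem disc_sparse_trinomial {n : ℕ} (hn : 3 ≤ n)
    (Dp Dq : MvPolynomial (Fin (n + 1)) ℤ)
    (hDp : IsDiscOf (Polynomial.C (X 1) * Polynomial.X +
        Polynomial.C (X ⟨n - 1, by omega⟩) * Polynomial.X ^ (n - 1) +
        Polynomial.C (X ⟨n, by omega⟩) * Polynomial.X ^ n) Dp)
    (hDq : IsDiscOf (Polynomial.C (X 1) +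
        Polynomial.C (X ⟨n - 1, by omega⟩) * Polynomial.X ^ (n - 2) +
        Polynomial.C (X ⟨n, by omega⟩) * Polynomial.X ^ (n - 1)) Dq) :
    Dp = (X 1) ^ 2 * Dq ∨ Dp = -((X 1) ^ 2 * Dq) := by
  exact Or.inl (hDp.sparse_trinomial hn (X_ne_zero _) hDq)
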